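/- Let V be a Γ-vertex algebra with vacuum 𝟏, where Γ is a group with homomorphism φ: Γ → ℂ^×. Define R_α(v) = lim_{x→0} Y_α(v,x)𝟏 and 𝒟v = Res_x x^{−2} Y₁(v,x)𝟏. Then for all α, β ∈ Γ and v ∈ V: (i) Y_α(𝒟v, x) = (d/dx)Y_α(v,x); (ii) [𝒟, Y_α(v,x)] = φ(α)(d/dx)Y_α(v,x); (iii) R_α Y_β(v,x) = Y_{αβ}(v,x) R_α. -/
import Mathlib


/-- Generalized binomial coefficient `binom(n, i)` for `n : ℤ`. -/
noncomputable def genBinom (n : ℤ) (i : ℕ) : ℂ :=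
  (∏ j ∈ Finset.range i, ((n : ℂ) - j)) / (Nat.factorial i : ℂ)

/-- `(V, {Y_α}, 𝟏)` is a `Γ`-vertex algebra (for a group `Γ` with homomorphism
`φ : Γ → ℂ^×`), in terms of modes `Y α u v n = u_{(α,n)}v` where
`Y_α(u,x) = Σ u_{(α,n)} x^{−n−1}`: truncation, vacuum, creation
(`Y_α(v,x)𝟏 ∈ V[[x]]`, `lim_{x→0} Y₁(v,x)𝟏 = v`), and the component form of the
`Γ`-Jacobi identity, with `γ = φ(β)⁻¹φ(α)`. -/
def IsGammaVA {Γ V : Type*} [Group Γ] [AddCommGroup V] [Module ℂ V]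
    (φ : Γ →* ℂˣ) (Y : Γ → V →ₗ[ℂ] V →ₗ[ℂ] (ℤ → V)) (vone : V) : Prop :=
  (∀ (α : Γ) (u v : V), ∃ N : ℤ, ∀ n ≥ N, Y α u v n = 0) ∧
  (∀ (α : Γ) (v : V) (n : ℤ), Y α vone v n = if n = -1 then v else 0) ∧
  (∀ (α : Γ) (v : V) (n : ℤ), 0 ≤ n → Y α v vone n = 0) ∧
  (∀ v : V, Y 1 v vone (-1) = v) ∧
  (∀ (α β : Γ) (u v w : V) (l m n : ℤ),
    (∑ᶠ i : ℕ, (genBinom l i * (-((((φ β)⁻¹ * φ α : ℂˣ) : ℂ))) ^ i) •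
        Y α u (Y β v w (n + (i : ℤ))) (m + l - (i : ℤ)))
      - (∑ᶠ i : ℕ, (genBinom l i * (-((((φ β)⁻¹ * φ α : ℂˣ) : ℂ))) ^ (l - (i : ℤ))) •
        Y β v (Y α u w (m + (i : ℤ))) (n + l - (i : ℤ)))
      = ∑ᶠ i : ℕ, (genBinom m i * ((((φ β)⁻¹ * φ α : ℂˣ) : ℂ)) ^ (m - (i : ℤ))) •
        Y β (Y (β⁻¹ * α) u v (l + (i : ℤ))) w (m + n - (i : ℤ)))


lemma genBinom_zero (n : ℤ) : genBinom n 0 = 1 := by simp [genBinom]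

lemma genBinom_one (n : ℤ) : genBinom n 1 = n := by simp [genBinom]

lemma genBinom_zero_left {i : ℕ} (hi : i ≠ 0) : genBinom 0 i = 0 := by
  unfold genBinom
  rw [Finset.prod_eq_zero (Finset.mem_range.mpr (Nat.pos_of_ne_zero hi)) (by simp)]
  simp

lemma prod_neg_two (i : ℕ) :
    ∏ j ∈ Finset.range i, (((-2 : ℤ) : ℂ) - j) = (-1) ^ i * (Nat.factorial (i + 1)) := by
  induction i with
  | zero => simp
  | succ k ih =>
    rw [Finset.prod_range_succ, ih, Nat.factorial_succ (k + 1)]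
    push_cast
    ring

lemma genBinom_neg_two (i : ℕ) : genBinom (-2) i = (-1) ^ i * ((i : ℂ) + 1) := by
  unfold genBinom
  rw [prod_neg_two, Nat.factorial_succ]
  have h : (Nat.factorial i : ℂ) ≠ 0 := Nat.cast_ne_zero.mpr (Nat.factorial_ne_zero i)
  push_cast
  field_simp

lemma coeff1 (i : ℕ) : genBinom (-2) i * (-(1:ℂ)) ^ i = (i : ℂ) + 1 := by
  rw [genBinom_neg_two]
  have : ((-1:ℂ) ^ i) * ((-1:ℂ) ^ i) = 1 := by
    rw [← pow_add]; exact Even.neg_one_pow ⟨i, rfl⟩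
  calc (-1:ℂ) ^ i * ((i:ℂ) + 1) * (-(1:ℂ)) ^ i
      = ((-1:ℂ) ^ i * (-1:ℂ) ^ i) * ((i:ℂ) + 1) := by ring
    _ = (i:ℂ) + 1 := by rw [this, one_mul]

lemma coeff2 (i : ℕ) : genBinom (-2) i * (-(1:ℂ)) ^ ((-2:ℤ) - (i:ℤ)) = (i : ℂ) + 1 := by
  have he : (-(1:ℂ)) ^ ((-2:ℤ) - (i:ℤ)) = (-(1:ℂ)) ^ i := by
    rw [show ((-2:ℤ) - (i:ℤ)) = -(((i + 2 : ℕ) : ℤ)) by push_cast; ring]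
    rw [zpow_neg, zpow_natCast, ← inv_pow, inv_neg, inv_one, pow_add]
    norm_num
  rw [he, coeff1]

/-- in a `Γ`-vertex algebra, with `R_α(v) = lim_{x→0}Y_α(v,x)𝟏`
(the mode `Y α v 𝟏 (−1)`) and `𝒟v = Res_x x^{−2}Y₁(v,x)𝟏` (the mode
`Y 1 v 𝟏 (−2)`):
(i)  `Y_α(𝒟v,x) = (d/dx)Y_α(v,x)`, in modes `(𝒟v)_{(α,n)} = −n·v_{(α,n−1)}`;
(ii) `[𝒟, Y_α(v,x)] = φ(α)(d/dx)Y_α(v,x)`;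
(iii) `R_α Y_β(v,x) = Y_{αβ}(v,x) R_α`. -/
theorem stmt_13 (Γ : Type*) [Group Γ] (φ : Γ →* ℂˣ)
    (V : Type*) [AddCommGroup V] [Module ℂ V]
    (Y : Γ → V →ₗ[ℂ] V →ₗ[ℂ] (ℤ → V)) (vone : V)
    (hV : IsGammaVA φ Y vone) :
    (∀ (α : Γ) (v u : V) (n : ℤ),
      Y α (Y 1 v vone (-2)) u n = (-(n : ℂ)) • Y α v u (n - 1)) ∧
    (∀ (α : Γ) (v u : V) (n : ℤ),
      Y 1 (Y α v u n) vone (-2) - Y α v (Y 1 u vone (-2)) n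
        = ((φ α : ℂ) * (-(n : ℂ))) • Y α v u (n - 1)) ∧
    (∀ (α β : Γ) (v u : V) (n : ℤ),
      Y α (Y β v u n) vone (-1) = Y (α * β) v (Y α u vone (-1)) n) := by
  obtain ⟨-, hvac, hcre, hone, hJ⟩ := hV
  refine ⟨?_, ?_, ?_⟩
  · -- Part (i)
    intro α v u n
    have hJ' := hJ α α v vone u (-2) 0 n
    have hc : ((((φ α)⁻¹ * φ α : ℂˣ)) : ℂ) = 1 := by simp
    rw [hc] at hJ'
    have hR : (∑ᶠ i : ℕ, (genBinom 0 i * (1:ℂ) ^ ((0:ℤ) - (i : ℤ))) •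
        Y α (Y (α⁻¹ * α) v vone (-2 + (i : ℤ))) u (0 + n - (i : ℤ)))
        = Y α (Y 1 v vone (-2)) u n := by
      rw [finsum_eq_single _ 0 (fun i hi => by rw [genBinom_zero_left hi, zero_mul, zero_smul])]
      simp [genBinom_zero]
    rcases lt_trichotomy n 0 with hn | hn | hn
    · have hs2 : (∑ᶠ i : ℕ, (genBinom (-2) i * (-(1:ℂ)) ^ ((-2:ℤ) - (i : ℤ))) •
          Y α vone (Y α v u (0 + (i : ℤ))) (n + -2 - (i : ℤ))) = 0 := by
        apply finsum_eq_zero_of_forall_eq_zero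
        intro i
        rw [hvac, if_neg (by omega), smul_zero]
      have hs1 : (∑ᶠ i : ℕ, (genBinom (-2) i * (-(1:ℂ)) ^ i) •
          Y α v (Y α vone u (n + (i : ℤ))) (0 + -2 - (i : ℤ)))
          = (-(n:ℂ)) • Y α v u (n - 1) := by
        rw [finsum_eq_single _ (-1 - n).toNat (fun i hi => by
          rw [hvac, if_neg (by omega)]; simp)]
        have hi' : (((-1 - n).toNat : ℕ) : ℤ) = -1 - n := Int.toNat_of_nonneg (by omega)
        rw [hvac, if_pos (by omega)]
        rw [show ((0:ℤ) + -2 - (((-1 - n).toNat : ℕ) : ℤ)) = n - 1 by omega]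
        congr 1
        rw [coeff1]
        calc ((((-1 - n).toNat : ℕ)) : ℂ) + 1
            = ((((-1 - n).toNat : ℕ) : ℤ) : ℂ) + 1 := by push_cast; ring
          _ = ((-1 - n : ℤ) : ℂ) + 1 := by rw [hi']
          _ = -(n:ℂ) := by push_cast; ring
      rw [hs1, hs2, hR, sub_zero] at hJ'
      exact hJ'.symm
    · subst hn
      have hs1 : (∑ᶠ i : ℕ, (genBinom (-2) i * (-(1:ℂ)) ^ i) •
          Y α v (Y α vone u ((0:ℤ) + (i : ℤ))) (0 + -2 - (i : ℤ))) = 0 := by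
        apply finsum_eq_zero_of_forall_eq_zero
        intro i
        rw [hvac, if_neg (by omega)]; simp
      have hs2 : (∑ᶠ i : ℕ, (genBinom (-2) i * (-(1:ℂ)) ^ ((-2:ℤ) - (i : ℤ))) •
          Y α vone (Y α v u (0 + (i : ℤ))) ((0:ℤ) + -2 - (i : ℤ))) = 0 := by
        apply finsum_eq_zero_of_forall_eq_zero
        intro i
        rw [hvac, if_neg (by omega), smul_zero]
      rw [hs1, hs2, hR] at hJ'
      rw [← hJ']
      norm_num
    · have hs1 : (∑ᶠ i : ℕ, (genBinom (-2) i * (-(1:ℂ)) ^ i) •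
          Y α v (Y α vone u (n + (i : ℤ))) (0 + -2 - (i : ℤ))) = 0 := by
        apply finsum_eq_zero_of_forall_eq_zero
        intro i
        rw [hvac, if_neg (by omega)]; simp
      have hs2 : (∑ᶠ i : ℕ, (genBinom (-2) i * (-(1:ℂ)) ^ ((-2:ℤ) - (i : ℤ))) •
          Y α vone (Y α v u (0 + (i : ℤ))) (n + -2 - (i : ℤ)))
          = (n:ℂ) • Y α v u (n - 1) := by
        rw [finsum_eq_single _ (n - 1).toNat (fun i hi => by
          rw [hvac, if_neg (by omega), smul_zero])]
        have hi' : (((n - 1).toNat : ℕ) : ℤ) = n - 1 := Int.toNat_of_nonneg (by omega)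
        rw [hvac, if_pos (by omega)]
        rw [show ((0:ℤ) + (((n - 1).toNat : ℕ) : ℤ)) = n - 1 by omega]
        congr 1
        rw [coeff2]
        calc ((((n - 1).toNat : ℕ)) : ℂ) + 1
            = ((((n - 1).toNat : ℕ) : ℤ) : ℂ) + 1 := by push_cast; ring
          _ = ((n - 1 : ℤ) : ℂ) + 1 := by rw [hi']
          _ = (n:ℂ) := by push_cast; ring
      rw [hs1, hs2, hR, zero_sub] at hJ'
      rw [← hJ', neg_smul]
  · -- Part (ii)
    intro α v u n
    have hJ' := hJ α 1 v u vone n 0 (-2)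
    have hc : ((((φ (1:Γ))⁻¹ * φ α : ℂˣ)) : ℂ) = ((φ α : ℂˣ) : ℂ) := by simp
    rw [hc, show ((1:Γ)⁻¹ * α) = α by simp] at hJ'
    have hs2 : (∑ᶠ i : ℕ, (genBinom n i * (-((φ α : ℂˣ) : ℂ)) ^ (n - (i : ℤ))) •
        Y 1 u (Y α v vone (0 + (i : ℤ))) (-2 + n - (i : ℤ))) = 0 := by
      apply finsum_eq_zero_of_forall_eq_zero
      intro i
      rw [hcre α v (0 + (i : ℤ)) (by omega)]
      simp
    have hs1 : (∑ᶠ i : ℕ, (genBinom n i * (-((φ α : ℂˣ) : ℂ)) ^ i) •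
        Y α v (Y 1 u vone (-2 + (i : ℤ))) (0 + n - (i : ℤ)))
        = Y α v (Y 1 u vone (-2)) n + (((φ α : ℂˣ) : ℂ) * (-(n:ℂ))) • Y α v u (n - 1) := by
      rw [finsum_eq_finset_sum_of_support_subset _ (s := ({0, 1} : Finset ℕ)) (by
        intro i hi
        simp only [Function.mem_support, ne_eq] at hi
        simp only [Finset.coe_insert, Finset.coe_singleton, Set.mem_insert_iff,
          Set.mem_singleton_iff]
        by_contra h
        push_neg at h
        apply hi
        rw [hcre 1 u (-2 + (i : ℤ)) (by omega)]
        simp)]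
      rw [Finset.sum_insert (by norm_num), Finset.sum_singleton]
      congr 1
      · simp [genBinom_zero]
      · rw [show ((-2:ℤ) + ((1:ℕ) : ℤ)) = -1 by norm_num, hone u]
        rw [show ((0:ℤ) + n - ((1:ℕ) : ℤ)) = n - 1 by norm_num]
        congr 1
        rw [genBinom_one]
        ring
    have hR : (∑ᶠ i : ℕ, (genBinom 0 i * ((φ α : ℂˣ) : ℂ) ^ ((0:ℤ) - (i : ℤ))) •
        Y 1 (Y α v u (n + (i : ℤ))) vone (0 + -2 - (i : ℤ)))
        = Y 1 (Y α v u n) vone (-2) := by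
      rw [finsum_eq_single _ 0 (fun i hi => by rw [genBinom_zero_left hi, zero_mul, zero_smul])]
      simp [genBinom_zero]
    rw [hs1, hs2, hR, sub_zero] at hJ'
    rw [← hJ', add_sub_cancel_left]
  · -- Part (iii)
    intro α β v u n
    have hJ' := hJ (α * β) α v u vone n 0 (-1)
    rw [show (α⁻¹ * (α * β)) = β by group] at hJ'
    have hs1 : (∑ᶠ i : ℕ, (genBinom n i * (-((((φ α)⁻¹ * φ (α * β) : ℂˣ)) : ℂ)) ^ i) •
        Y (α * β) v (Y α u vone (-1 + (i : ℤ))) (0 + n - (i : ℤ)))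
        = Y (α * β) v (Y α u vone (-1)) n := by
      rw [finsum_eq_single _ 0 (fun i hi => by
        rw [hcre α u (-1 + (i : ℤ)) (by omega)]; simp)]
      simp [genBinom_zero]
    have hs2 : (∑ᶠ i : ℕ, (genBinom n i * (-((((φ α)⁻¹ * φ (α * β) : ℂˣ)) : ℂ)) ^ (n - (i : ℤ))) •
        Y α u (Y (α * β) v vone (0 + (i : ℤ))) (-1 + n - (i : ℤ))) = 0 := by
      apply finsum_eq_zero_of_forall_eq_zero
      intro i
      rw [hcre (α * β) v (0 + (i : ℤ)) (by omega)]
      simp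
    have hR : (∑ᶠ i : ℕ, (genBinom 0 i * ((((φ α)⁻¹ * φ (α * β) : ℂˣ)) : ℂ) ^ ((0:ℤ) - (i : ℤ))) •
        Y α (Y β v u (n + (i : ℤ))) vone (0 + -1 - (i : ℤ)))
        = Y α (Y β v u n) vone (-1) := by
      rw [finsum_eq_single _ 0 (fun i hi => by rw [genBinom_zero_left hi, zero_mul, zero_smul])]
      simp [genBinom_zero]
    rw [hs1, hs2, hR, sub_zero] at hJ'
    exact hJ'.symm
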